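/- arXiv:2009.05529 — 3 statements merged into one kernel-verified Lean document; each statement's English description precedes it below -/
import Mathlib

section
/- Let X, Y, Z be n×n matrices over a commutative ring with X invertible, and let I be the ideal generated by all entries of the commutators [X,Y], [Y,Z], and [Z,X]. Then tr(XYZ - 2YXZ + X⁻¹YX²Z) lies in I². -/
open Matrix

theorem trace_f_zero_mem_sq {n : ℕ} {R : Type*} [CommRing R]
    (X Y Z : Matrix (Fin n) (Fin n) R) [Invertible X] :
    (X * Y * Z - 2 • (Y * X * Z) + ⅟X * Y * X ^ 2 * Z).trace ∈
      (Ideal.span {r : R | ∃ i j, (X * Y - Y * X) i j = r ∨ (Y * Z - Z * Y) i j = r ∨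
        (Z * X - X * Z) i j = r}) ^ 2 := by
  set I : Ideal R := Ideal.span {r : R | ∃ i j, (X * Y - Y * X) i j = r ∨
      (Y * Z - Z * Y) i j = r ∨ (Z * X - X * Z) i j = r} with hI
  set A := X * Y - Y * X with hA
  set C := Z * X - X * Z with hC
  have hAmem : ∀ i j, A i j ∈ I := fun i j => Ideal.subset_span ⟨i, j, Or.inl rfl⟩
  have hCmem : ∀ i j, C i j ∈ I := fun i j =>
    Ideal.subset_span ⟨i, j, Or.inr (Or.inr rfl)⟩
  have h1 : X * Y * Z - 2 • (Y * X * Z) + ⅟X * Y * X ^ 2 * Z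
      = A * Z - ⅟X * (A * X * Z) := by
    simp only [hA, sub_mul, mul_sub, mul_assoc, pow_two, ← mul_assoc (⅟X) X,
      invOf_mul_self, one_mul, two_smul]
    noncomm_ring
  have h2 : A * C * ⅟X = A * Z - A * X * Z * ⅟X := by
    simp only [hC, mul_sub, sub_mul, mul_assoc, mul_invOf_self, mul_one]
  have key : (X * Y * Z - 2 • (Y * X * Z) + ⅟X * Y * X ^ 2 * Z).trace
      = (A * C * ⅟X).trace := by
    rw [h1, h2, Matrix.trace_sub, Matrix.trace_sub,
      Matrix.trace_mul_comm (⅟X) (A * X * Z)]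
  rw [key, Matrix.trace, sq]
  refine Ideal.sum_mem _ fun i _ => ?_
  simp only [Matrix.diag_apply, Matrix.mul_apply]
  refine Ideal.sum_mem _ fun j _ => ?_
  rw [Finset.sum_mul]
  refine Ideal.sum_mem _ fun k _ => ?_
  exact Ideal.mul_mem_right _ _ (Ideal.mul_mem_mul (hAmem i k) (hCmem k j))
end

section
/- Let X, Y, Z be n×n matrices over a commutative ring with X invertible, and let I be the ideal generated by all entries of [X,Y], [Y,Z], [Z,X]. Then for every integer f ≥ -1, the element tr(X^{-f} Y X^{f+1} Z - X^{-(f+1)} Y X^{f+2} Z) - tr(XYZ - YXZ) lies in I². -/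
open Matrix

private lemma trace_mul_mem_sq' {n : ℕ} {R : Type*} [CommRing R] (I : Ideal R)
    (A B : Matrix (Fin n) (Fin n) R)
    (hA : ∀ i j, A i j ∈ I) (hB : ∀ i j, B i j ∈ I) : (A * B).trace ∈ I ^ 2 := by
  rw [sq, Matrix.trace]
  refine Submodule.sum_mem _ fun i _ => ?_
  rw [Matrix.diag_apply, Matrix.mul_apply]
  exact Submodule.sum_mem _ fun j _ => Ideal.mul_mem_mul (hA i j) (hB j i)

private lemma mul_entry_mem' {n : ℕ} {R : Type*} [CommRing R] (I : Ideal R)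
    (A M : Matrix (Fin n) (Fin n) R)
    (hM : ∀ i j, M i j ∈ I) : ∀ i j, (A * M) i j ∈ I := by
  intro i j
  rw [Matrix.mul_apply]
  exact Submodule.sum_mem _ fun k _ => I.mul_mem_left _ (hM k j)

private lemma entry_mul_mem' {n : ℕ} {R : Type*} [CommRing R] (I : Ideal R)
    (A M : Matrix (Fin n) (Fin n) R)
    (hM : ∀ i j, M i j ∈ I) : ∀ i j, (M * A) i j ∈ I := by
  intro i j
  rw [Matrix.mul_apply]
  exact Submodule.sum_mem _ fun k _ => I.mul_mem_right _ (hM i k)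

theorem induction_trace_mem_sq {n : ℕ} {R : Type*} [CommRing R]
    (X : (Matrix (Fin n) (Fin n) R)ˣ) (Y Z : Matrix (Fin n) (Fin n) R)
    (f : ℤ) (hf : -1 ≤ f) :
    ((↑(X ^ (-f)) : Matrix (Fin n) (Fin n) R) * Y * (↑(X ^ (f + 1)) : Matrix (Fin n) (Fin n) R) * Z -
        (↑(X ^ (-(f + 1))) : Matrix (Fin n) (Fin n) R) * Y *
          (↑(X ^ (f + 2)) : Matrix (Fin n) (Fin n) R) * Z).trace -
      ((X : Matrix (Fin n) (Fin n) R) * Y * Z - Y * (X : Matrix (Fin n) (Fin n) R) * Z).trace ∈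
      (Ideal.span {r : R | ∃ i j, ((X : Matrix (Fin n) (Fin n) R) * Y -
          Y * (X : Matrix (Fin n) (Fin n) R)) i j = r ∨
        (Y * Z - Z * Y) i j = r ∨
        (Z * (X : Matrix (Fin n) (Fin n) R) -
          (X : Matrix (Fin n) (Fin n) R) * Z) i j = r}) ^ 2 := by
  set Xm : Matrix (Fin n) (Fin n) R := (X : Matrix (Fin n) (Fin n) R) with hXm
  set Xi : Matrix (Fin n) (Fin n) R := ((X⁻¹ : (Matrix (Fin n) (Fin n) R)ˣ) : Matrix (Fin n) (Fin n) R) with hXi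
  set I : Ideal R := Ideal.span {r : R | ∃ i j, (Xm * Y - Y * Xm) i j = r ∨
        (Y * Z - Z * Y) i j = r ∨ (Z * Xm - Xm * Z) i j = r} with hI
  have hC : ∀ i j, (Xm * Y - Y * Xm) i j ∈ I := fun i j =>
    Ideal.subset_span ⟨i, j, Or.inl rfl⟩
  have hZX : ∀ i j, (Z * Xm - Xm * Z) i j ∈ I := fun i j =>
    Ideal.subset_span ⟨i, j, Or.inr (Or.inr rfl)⟩
  have hXZ : ∀ i j, (Xm * Z - Z * Xm) i j ∈ I := by
    intro i j
    rw [show Xm * Z - Z * Xm = -(Z * Xm - Xm * Z) from (neg_sub _ _).symm,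
      Matrix.neg_apply]
    exact I.neg_mem (hZX i j)
  have hXXi : Xm * Xi = 1 := by
    rw [hXm, hXi, ← Units.val_mul, mul_inv_cancel, Units.val_one]
  have hXiX : Xi * Xm = 1 := by
    rw [hXm, hXi, ← Units.val_mul, inv_mul_cancel, Units.val_one]
  -- key induction
  have key : ∀ g : ℕ, ∀ i j, (Xm ^ g * Z * Xi ^ g - Z) i j ∈ I := by
    intro g
    induction g with
    | zero => simp
    | succ g ih =>
      have eq : Xm ^ (g + 1) * Z * Xi ^ (g + 1) - Z
          = Xm * ((Xm ^ g * Z * Xi ^ g - Z) * Xi) + (Xm * Z - Z * Xm) * Xi := by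
        have e2 : Xm * ((Xm ^ g * Z * Xi ^ g - Z) * Xi) + (Xm * Z - Z * Xm) * Xi
            = Xm * Xm ^ g * Z * (Xi ^ g * Xi) - Z * (Xm * Xi) := by noncomm_ring
        rw [e2, hXXi, mul_one, ← pow_succ', ← pow_succ]
      intro i j
      rw [eq]
      have h2 := mul_entry_mem' I Xm _ (entry_mul_mem' I Xi _ ih)
      have h3 := entry_mul_mem' I Xi _ hXZ
      rw [show (Xm * ((Xm ^ g * Z * Xi ^ g - Z) * Xi) + (Xm * Z - Z * Xm) * Xi) i j
          = (Xm * ((Xm ^ g * Z * Xi ^ g - Z) * Xi)) i j + ((Xm * Z - Z * Xm) * Xi) i j from rfl]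
      exact I.add_mem (h2 i j) (h3 i j)
  -- cast the powers
  obtain ⟨g, hg⟩ : ∃ g : ℕ, (g : ℤ) = f + 1 := ⟨(f + 1).toNat, Int.toNat_of_nonneg (by linarith)⟩
  have hA : (↑(X ^ (f + 1)) : Matrix (Fin n) (Fin n) R) = Xm ^ g := by
    rw [← hg, zpow_natCast, Units.val_pow_eq_pow_val, hXm]
  have hB : (↑(X ^ (-(f + 1))) : Matrix (Fin n) (Fin n) R) = Xi ^ g := by
    rw [← hg, _root_.zpow_neg, ← _root_.inv_zpow, zpow_natCast, Units.val_pow_eq_pow_val, hXi]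
  have hnegf : (↑(X ^ (-f)) : Matrix (Fin n) (Fin n) R) = Xm * Xi ^ g := by
    have h1 : X ^ (-f) = X ^ ((1 : ℤ) + -(f + 1)) := by norm_num
    rw [h1, _root_.zpow_add, zpow_one, Units.val_mul, hB, hXm]
  have hf2 : (↑(X ^ (f + 2)) : Matrix (Fin n) (Fin n) R) = Xm * Xm ^ g := by
    have h1 : X ^ (f + 2) = X ^ ((1 : ℤ) + (f + 1)) := by ring_nf
    rw [h1, _root_.zpow_add, zpow_one, Units.val_mul, hA, hXm]
  rw [hA, hB, hnegf, hf2]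
  -- commute Xm with Xi^g
  have hcomm : Xm * Xi ^ g = Xi ^ g * Xm := by
    have hc : Commute Xm Xi := by
      show Xm * Xi = Xi * Xm
      rw [hXXi, hXiX]
    exact (hc.pow_right g).eq
  have traceq :
      (Xm * Xi ^ g * Y * Xm ^ g * Z - Xi ^ g * Y * (Xm * Xm ^ g) * Z).trace
        - (Xm * Y * Z - Y * Xm * Z).trace
      = ((Xm * Y - Y * Xm) * (Xm ^ g * Z * Xi ^ g - Z)).trace := by
    have e1 : Xm * Xi ^ g * Y * Xm ^ g * Z - Xi ^ g * Y * (Xm * Xm ^ g) * Z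
        = Xi ^ g * ((Xm * Y - Y * Xm) * (Xm ^ g * Z)) := by
      rw [hcomm]; noncomm_ring
    rw [e1, Matrix.trace_mul_comm, ← Matrix.trace_sub]
    congr 1
    noncomm_ring
  rw [traceq]
  exact trace_mul_mem_sq' I _ _ hC (key g)
end

section
/- Let X₁, X₂, P be n×n matrices over a commutative ring, e a scalar with 1 + eX₂ invertible, and let I be the ideal generated by all entries of [X₁,X₂], [X₂,P], [P,X₁], localized so that 1+eX₂ is invertible. Then tr([X₁, X₂(1+eX₂)⁻¹](1+eX₂)²P) - tr([X₁,X₂]P) lies in I². -/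
open Matrix

set_option maxHeartbeats 1000000 in
theorem hirzebruch_chart_trace_mem_sq {n : ℕ} {R : Type*} [CommRing R]
    (e : R) (X₁ X₂ P : Matrix (Fin n) (Fin n) R)
    [Invertible (1 + e • X₂)] :
    ((X₁ * (X₂ * ⅟(1 + e • X₂)) - (X₂ * ⅟(1 + e • X₂)) * X₁) *
        ((1 + e • X₂) ^ 2 * P)).trace - ((X₁ * X₂ - X₂ * X₁) * P).trace ∈
      (Ideal.span {r : R | ∃ i j, (X₁ * X₂ - X₂ * X₁) i j = r ∨
        (X₂ * P - P * X₂) i j = r ∨ (P * X₁ - X₁ * P) i j = r}) ^ 2 := by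
  obtain ⟨Y, hAY, hYA, hYdef⟩ : ∃ Y, (1 + e • X₂) * Y = 1 ∧ Y * (1 + e • X₂) = 1 ∧
      Y = ⅟(1 + e • X₂) := ⟨⅟(1 + e • X₂), mul_invOf_self _, invOf_mul_self _, rfl⟩
  rw [← hYdef]
  clear hYdef
  set C := X₁ * X₂ - X₂ * X₁ with hCdef
  set D := X₂ * P - P * X₂ with hDdef
  have hY : (1 : Matrix (Fin n) (Fin n) R) - e • (X₂ * Y) = Y := by
    have h := hAY
    rw [add_mul, one_mul, smul_mul_assoc] at h
    exact (eq_sub_of_add_eq h).symm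
  have hcommA : X₂ * (1 + e • X₂) = (1 + e • X₂) * X₂ := by
    rw [mul_add, add_mul, mul_one, one_mul, mul_smul_comm, smul_mul_assoc]
  have hYX : Y * X₂ = X₂ * Y := by
    calc Y * X₂ = Y * X₂ * ((1 + e • X₂) * Y) := by rw [hAY, mul_one]
      _ = Y * (X₂ * (1 + e • X₂)) * Y := by noncomm_ring
      _ = Y * ((1 + e • X₂) * X₂) * Y := by rw [hcommA]
      _ = X₂ * Y := by rw [← mul_assoc Y (1 + e • X₂) X₂, hYA, one_mul]
  have key : ((X₁ * (X₂ * Y) - (X₂ * Y) * X₁) * ((1 + e • X₂) ^ 2 * P)).trace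
      - (C * P).trace = e * ((Y * C * D).trace) := by
    have hW : ∀ W : Matrix (Fin n) (Fin n) R, W - e • (X₂ * (Y * W)) = Y * W := by
      intro W
      have h := congrArg (· * W) hY
      simpa [sub_mul, smul_mul_assoc, mul_assoc] using h
    have hM : (X₁ * (X₂ * Y) - (X₂ * Y) * X₁) * ((1 + e • X₂) ^ 2 * P)
        = Y * C * ((1 + e • X₂) * P) := by
      have hYA2 : Y * ((1 + e • X₂) ^ 2 * P) = (1 + e • X₂) * P := by
        rw [sq, ← mul_assoc, ← mul_assoc, hYA, one_mul]
      have hA2 : (1 + e • X₂) ^ 2 * P = (1 + e • X₂) * P + e • (X₂ * ((1 + e • X₂) * P)) := by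
        rw [sq, mul_assoc]
        nth_rewrite 1 [show (1 + e • X₂) * ((1 + e • X₂) * P)
            = (1 + e • X₂) * P + e • (X₂ * ((1 + e • X₂) * P)) by
          rw [add_mul, one_mul, smul_mul_assoc]]
        rfl
      calc (X₁ * (X₂ * Y) - (X₂ * Y) * X₁) * ((1 + e • X₂) ^ 2 * P)
          = X₁ * (X₂ * (Y * ((1 + e • X₂) ^ 2 * P)))
            - X₂ * (Y * (X₁ * ((1 + e • X₂) ^ 2 * P))) := by
            rw [sub_mul]; simp only [mul_assoc]
        _ = X₁ * (X₂ * ((1 + e • X₂) * P)) - X₂ * (Y * (X₁ * ((1 + e • X₂) * P)))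
            - e • (X₂ * (Y * (X₁ * (X₂ * ((1 + e • X₂) * P))))) := by
            rw [hYA2, hA2]
            simp only [mul_add, mul_smul_comm]
            abel
        _ = Y * (X₁ * (X₂ * ((1 + e • X₂) * P))) - X₂ * (Y * (X₁ * ((1 + e • X₂) * P))) := by
            conv_rhs => rw [← hW (X₁ * (X₂ * ((1 + e • X₂) * P)))]
            abel
        _ = Y * C * ((1 + e • X₂) * P) := by
            rw [hCdef]
            simp only [mul_sub, sub_mul, mul_assoc]
            rw [← mul_assoc Y X₂, hYX, mul_assoc]
    have hCP : C * P = Y * ((1 + e • X₂) * (C * P)) := by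
      rw [← mul_assoc, hYA, one_mul]
    rw [hM, hCP, ← trace_sub]
    have hmat : Y * C * ((1 + e • X₂) * P) - Y * ((1 + e • X₂) * (C * P))
        = e • (Y * C * D) + e • (Y * C * P * X₂) - e • (X₂ * (Y * C * P)) := by
      have h1 : C * (1 + e • X₂) = C + e • (C * X₂) := by
        rw [mul_add, mul_one, mul_smul_comm]
      have h2 : (1 + e • X₂) * (C * P) = C * P + e • (X₂ * (C * P)) := by
        rw [add_mul, one_mul, smul_mul_assoc]
      calc Y * C * ((1 + e • X₂) * P) - Y * ((1 + e • X₂) * (C * P))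
          = Y * (C * (1 + e • X₂)) * P - Y * ((1 + e • X₂) * (C * P)) := by
            simp only [mul_assoc]
        _ = e • (Y * (C * (X₂ * P))) - e • (Y * (X₂ * (C * P))) := by
            rw [h1, h2]
            simp only [add_mul, mul_add, smul_mul_assoc, mul_smul_comm, mul_assoc]
            abel
        _ = e • (Y * C * D) + e • (Y * C * P * X₂) - e • (X₂ * (Y * C * P)) := by
            rw [hDdef]
            rw [← mul_assoc Y X₂, hYX]
            simp only [mul_sub, mul_assoc, smul_sub]
            abel
    rw [hmat]
    simp only [trace_sub, trace_add, trace_smul, smul_eq_mul]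
    rw [trace_mul_comm (Y * C * P) X₂]
    ring
  rw [key]
  have hC : ∀ i j, C i j ∈ Ideal.span {r : R | ∃ i j, C i j = r ∨ D i j = r ∨
      (P * X₁ - X₁ * P) i j = r} := fun i j => Ideal.subset_span ⟨i, j, Or.inl rfl⟩
  have hD : ∀ i j, D i j ∈ Ideal.span {r : R | ∃ i j, C i j = r ∨ D i j = r ∨
      (P * X₁ - X₁ * P) i j = r} := fun i j => Ideal.subset_span ⟨i, j, Or.inr (Or.inl rfl)⟩
  refine Ideal.mul_mem_left _ e ?_
  rw [Matrix.trace]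
  refine Submodule.sum_mem _ fun i _ => ?_
  rw [Matrix.diag_apply, Matrix.mul_apply]
  refine Submodule.sum_mem _ fun k _ => ?_
  rw [sq]
  refine Ideal.mul_mem_mul ?_ (hD k i)
  rw [Matrix.mul_apply]
  exact Submodule.sum_mem _ fun m _ => Ideal.mul_mem_left _ _ (hC m k)
end
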